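/- Let a, b ∈ ℝ and let R = a(φ₅ + φ₇) + b(φ₆ + φ₈) be the corresponding correction function on the square K. Then for every v in the shape space P(K) = P₂(K) + span{x₁³, x₂³}, the Hessian inner product satisfies the exact identity ∫_K Σ_{i,j=1}^{2} (∂²R/∂xᵢ∂xⱼ)(∂²v/∂xᵢ∂xⱼ) dx₁dx₂ = a ∫_K ∂³v/∂x₁³ dx₁dx₂ + b ∫_K ∂³v/∂x₂³ dx₁dx₂. -/
import Mathlib


open MeasureTheory

/-- Partial derivative in the first variable of a curried function on `ℝ²`. -/
noncomputable def pdx (f : ℝ → ℝ → ℝ) : ℝ → ℝ → ℝ := fun x y => deriv (fun t => f t y) x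

/-- Partial derivative in the second variable of a curried function on `ℝ²`. -/
noncomputable def pdy (f : ℝ → ℝ → ℝ) : ℝ → ℝ → ℝ := fun x y => deriv (fun t => f x t) y

/-- Membership in the shape space `P(K) = P₂(K) + span{x₁³, x₂³}` of the two-dimensional
rectangular Morley element. -/
def MorleyShape2 (w : ℝ → ℝ → ℝ) : Prop :=
  ∃ c0 c1 c2 c3 c4 c5 c6 c7 : ℝ, ∀ x y : ℝ,
    w x y = c0 + c1 * x + c2 * y + c3 * x ^ 2 + c4 * (x * y) + c5 * y ^ 2
      + c6 * x ^ 3 + c7 * y ^ 3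

/-- The correction function `R = a (φ₅ + φ₇) + b (φ₆ + φ₈)` on the square `K`,
expressed in the scaled coordinates `ξᵢ = (xᵢ - x_ic)/h`. -/
noncomputable def corr2 (a b x1c x2c h : ℝ) : ℝ → ℝ → ℝ := fun x y =>
  a * ((h / 4) * (((x - x1c) / h + 1) ^ 2 * ((x - x1c) / h - 1))
      + (h / 4) * (((x - x1c) / h + 1) * ((x - x1c) / h - 1) ^ 2))
    + b * ((h / 4) * (((y - x2c) / h + 1) ^ 2 * ((y - x2c) / h - 1))
      + (h / 4) * (((y - x2c) / h + 1) * ((y - x2c) / h - 1) ^ 2))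

-- helper lemmas

lemma cubicDeriv (p q r s x : ℝ) :
    deriv (fun t : ℝ => p + q * t + r * t ^ 2 + s * t ^ 3) x
      = q + 2 * r * x + 3 * s * x ^ 2 := by
  have h1 : HasDerivAt (fun t : ℝ => t) 1 x := hasDerivAt_id x
  have h2 : HasDerivAt (fun t : ℝ => t ^ 2) (2 * x) x := by simpa using hasDerivAt_pow 2 x
  have h3 : HasDerivAt (fun t : ℝ => t ^ 3) (3 * x ^ 2) x := by simpa using hasDerivAt_pow 3 x
  have h : HasDerivAt (fun t : ℝ => p + q * t + r * t ^ 2 + s * t ^ 3)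
      (0 + q * 1 + r * (2 * x) + s * (3 * x ^ 2)) x :=
    (((hasDerivAt_const x p).add (h1.const_mul q)).add (h2.const_mul r)).add (h3.const_mul s)
  rw [h.deriv]; ring

lemma integ_quad (p q r lo hi : ℝ) :
    (∫ y in lo..hi, (p + q * y + r * y ^ 2)) =
      p * (hi - lo) + q * ((hi ^ 2 - lo ^ 2) / 2) + r * ((hi ^ 3 - lo ^ 3) / 3) := by
  have i1 : IntervalIntegrable (fun _ : ℝ => p) volume lo hi :=
    (continuous_const).intervalIntegrable lo hi
  have i2 : IntervalIntegrable (fun y : ℝ => q * y) volume lo hi :=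
    (continuous_const.mul continuous_id).intervalIntegrable lo hi
  have i3 : IntervalIntegrable (fun y : ℝ => r * y ^ 2) volume lo hi :=
    (continuous_const.mul (continuous_pow 2)).intervalIntegrable lo hi
  rw [intervalIntegral.integral_add (i1.add i2) i3, intervalIntegral.integral_add i1 i2,
    intervalIntegral.integral_const, intervalIntegral.integral_const_mul,
    intervalIntegral.integral_const_mul, integral_id, integral_pow]
  rw [smul_eq_mul]
  push_cast
  ring

set_option maxHeartbeats 1000000 in
/-- Exact identity for the Hessian inner product of the correction function against
functions of the 2D rectangular Morley shape space. -/
theorem stmt_8 (x1c x2c h : ℝ) (hh : 0 < h) (a b : ℝ) (v : ℝ → ℝ → ℝ)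
    (hv : MorleyShape2 v) :
    (∫ x in (x1c - h)..(x1c + h), ∫ y in (x2c - h)..(x2c + h),
        pdx (pdx (corr2 a b x1c x2c h)) x y * pdx (pdx v) x y
          + pdx (pdy (corr2 a b x1c x2c h)) x y * pdx (pdy v) x y
          + pdy (pdx (corr2 a b x1c x2c h)) x y * pdy (pdx v) x y
          + pdy (pdy (corr2 a b x1c x2c h)) x y * pdy (pdy v) x y)
      = a * (∫ x in (x1c - h)..(x1c + h), ∫ y in (x2c - h)..(x2c + h), pdx (pdx (pdx v)) x y)
        + b * (∫ x in (x1c - h)..(x1c + h), ∫ y in (x2c - h)..(x2c + h), pdy (pdy (pdy v)) x y) := by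
  obtain ⟨c0, c1, c2, c3, c4, c5, c6, c7, hw⟩ := hv
  have hne : h ≠ 0 := hh.ne'
  set R := corr2 a b x1c x2c h with hRdef
  -- first derivatives of R
  have hRx : ∀ x y : ℝ, pdx R x y = a * (3 * (x - x1c) ^ 2 - h ^ 2) / (2 * h ^ 2) := by
    intro x y
    have he : (fun t => R t y)
        = fun t => (b * ((h / 4) * (((y - x2c) / h + 1) ^ 2 * ((y - x2c) / h - 1)))
            + b * ((h / 4) * (((y - x2c) / h + 1) * ((y - x2c) / h - 1) ^ 2))
            + (a * x1c / 2 - a * x1c ^ 3 / (2 * h ^ 2)))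
          + (a * (3 * x1c ^ 2 - h ^ 2) / (2 * h ^ 2)) * t
          + (-(3 * a * x1c) / (2 * h ^ 2)) * t ^ 2 + (a / (2 * h ^ 2)) * t ^ 3 := by
      funext t
      show corr2 a b x1c x2c h t y = _
      unfold corr2
      field_simp
      ring
    show deriv (fun t => R t y) x = _
    rw [he, cubicDeriv]
    field_simp
    ring
  have hRy : ∀ x y : ℝ, pdy R x y = b * (3 * (y - x2c) ^ 2 - h ^ 2) / (2 * h ^ 2) := by
    intro x y
    have he : (fun t => R x t)
        = fun t => (a * ((h / 4) * (((x - x1c) / h + 1) ^ 2 * ((x - x1c) / h - 1)))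
            + a * ((h / 4) * (((x - x1c) / h + 1) * ((x - x1c) / h - 1) ^ 2))
            + (b * x2c / 2 - b * x2c ^ 3 / (2 * h ^ 2)))
          + (b * (3 * x2c ^ 2 - h ^ 2) / (2 * h ^ 2)) * t
          + (-(3 * b * x2c) / (2 * h ^ 2)) * t ^ 2 + (b / (2 * h ^ 2)) * t ^ 3 := by
      funext t
      show corr2 a b x1c x2c h x t = _
      unfold corr2
      field_simp
      ring
    show deriv (fun t => R x t) y = _
    rw [he, cubicDeriv]
    field_simp
    ring
  -- second derivatives of R
  have hRxx : pdx (pdx R) = fun x _ => 3 * a * (x - x1c) / h ^ 2 := by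
    funext x y
    have he : (fun t => pdx R t y)
        = fun t => (a * (3 * x1c ^ 2 - h ^ 2) / (2 * h ^ 2)) + (-(3 * a * x1c) / h ^ 2) * t
            + (3 * a / (2 * h ^ 2)) * t ^ 2 + 0 * t ^ 3 := by
      funext t
      rw [hRx t y]
      field_simp
      ring
    show deriv (fun t => pdx R t y) x = _
    rw [he, cubicDeriv]
    field_simp
    ring
  have hRyy : pdy (pdy R) = fun _ y => 3 * b * (y - x2c) / h ^ 2 := by
    funext x y
    have he : (fun t => pdy R x t)
        = fun t => (b * (3 * x2c ^ 2 - h ^ 2) / (2 * h ^ 2)) + (-(3 * b * x2c) / h ^ 2) * t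
            + (3 * b / (2 * h ^ 2)) * t ^ 2 + 0 * t ^ 3 := by
      funext t
      rw [hRy x t]
      field_simp
      ring
    show deriv (fun t => pdy R x t) y = _
    rw [he, cubicDeriv]
    field_simp
    ring
  have hRxy : pdy (pdx R) = fun _ _ => (0 : ℝ) := by
    funext x y
    have he : (fun t => pdx R x t) = fun _ => a * (3 * (x - x1c) ^ 2 - h ^ 2) / (2 * h ^ 2) :=
      funext fun t => hRx x t
    show deriv (fun t => pdx R x t) y = _
    rw [he, deriv_const]
  have hRyx : pdx (pdy R) = fun _ _ => (0 : ℝ) := by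
    funext x y
    have he : (fun t => pdy R t y) = fun _ => b * (3 * (y - x2c) ^ 2 - h ^ 2) / (2 * h ^ 2) :=
      funext fun t => hRy t y
    show deriv (fun t => pdy R t y) x = _
    rw [he, deriv_const]
  -- derivatives of v
  have hvx : ∀ x y : ℝ, pdx v x y = (c1 + c4 * y) + 2 * c3 * x + 3 * c6 * x ^ 2 := by
    intro x y
    have he : (fun t => v t y)
        = fun t => (c0 + c2 * y + c5 * y ^ 2 + c7 * y ^ 3) + (c1 + c4 * y) * t
            + c3 * t ^ 2 + c6 * t ^ 3 := by
      funext t; rw [hw]; ring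
    show deriv (fun t => v t y) x = _
    rw [he, cubicDeriv]
  have hvy : ∀ x y : ℝ, pdy v x y = (c2 + c4 * x) + 2 * c5 * y + 3 * c7 * y ^ 2 := by
    intro x y
    have he : (fun t => v x t)
        = fun t => (c0 + c1 * x + c3 * x ^ 2 + c6 * x ^ 3) + (c2 + c4 * x) * t
            + c5 * t ^ 2 + c7 * t ^ 3 := by
      funext t; rw [hw]; ring
    show deriv (fun t => v x t) y = _
    rw [he, cubicDeriv]
  have hvxx : pdx (pdx v) = fun x _ => 2 * c3 + 6 * c6 * x := by
    funext x y
    have he : (fun t => pdx v t y)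
        = fun t => (c1 + c4 * y) + (2 * c3) * t + (3 * c6) * t ^ 2 + 0 * t ^ 3 := by
      funext t; rw [hvx t y]; ring
    show deriv (fun t => pdx v t y) x = _
    rw [he, cubicDeriv]; ring
  have hvyy : pdy (pdy v) = fun _ y => 2 * c5 + 6 * c7 * y := by
    funext x y
    have he : (fun t => pdy v x t)
        = fun t => (c2 + c4 * x) + (2 * c5) * t + (3 * c7) * t ^ 2 + 0 * t ^ 3 := by
      funext t; rw [hvy x t]; ring
    show deriv (fun t => pdy v x t) y = _
    rw [he, cubicDeriv]; ring
  have hvxy : pdy (pdx v) = fun _ _ => c4 := by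
    funext x y
    have he : (fun t => pdx v x t)
        = fun t => (c1 + 2 * c3 * x + 3 * c6 * x ^ 2) + c4 * t + 0 * t ^ 2 + 0 * t ^ 3 := by
      funext t; rw [hvx x t]; ring
    show deriv (fun t => pdx v x t) y = _
    rw [he, cubicDeriv]; ring
  have hvyx : pdx (pdy v) = fun _ _ => c4 := by
    funext x y
    have he : (fun t => pdy v t y)
        = fun t => (c2 + 2 * c5 * y + 3 * c7 * y ^ 2) + c4 * t + 0 * t ^ 2 + 0 * t ^ 3 := by
      funext t; rw [hvy t y]; ring
    show deriv (fun t => pdy v t y) x = _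
    rw [he, cubicDeriv]; ring
  have hvxxx : pdx (pdx (pdx v)) = fun _ _ => 6 * c6 := by
    funext x y
    have he : (fun t => pdx (pdx v) t y)
        = fun t => 2 * c3 + (6 * c6) * t + 0 * t ^ 2 + 0 * t ^ 3 := by
      funext t; rw [hvxx]; ring
    show deriv (fun t => pdx (pdx v) t y) x = _
    rw [he, cubicDeriv]; ring
  have hvyyy : pdy (pdy (pdy v)) = fun _ _ => 6 * c7 := by
    funext x y
    have he : (fun t => pdy (pdy v) x t)
        = fun t => 2 * c5 + (6 * c7) * t + 0 * t ^ 2 + 0 * t ^ 3 := by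
      funext t; rw [hvyy]; ring
    show deriv (fun t => pdy (pdy v) x t) y = _
    rw [he, cubicDeriv]; ring
  simp only [hvxxx, hvyyy]
  simp only [hRxx, hRxy, hRyx, hRyy, hvxx, hvxy, hvyx, hvyy]
  have hinner : ∀ x : ℝ,
      (∫ y in (x2c - h)..(x2c + h),
        3 * a * (x - x1c) / h ^ 2 * (2 * c3 + 6 * c6 * x) + 0 * c4 + 0 * c4
          + 3 * b * (y - x2c) / h ^ 2 * (2 * c5 + 6 * c7 * y))
        = 6 * a * (x - x1c) * (2 * c3 + 6 * c6 * x) / h + 12 * b * c7 * h := by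
    intro x
    rw [show (fun y => 3 * a * (x - x1c) / h ^ 2 * (2 * c3 + 6 * c6 * x) + 0 * c4 + 0 * c4
          + 3 * b * (y - x2c) / h ^ 2 * (2 * c5 + 6 * c7 * y))
        = fun y => (3 * a * (x - x1c) / h ^ 2 * (2 * c3 + 6 * c6 * x)
              - 6 * b * c5 * x2c / h ^ 2)
            + ((6 * b * c5 - 18 * b * c7 * x2c) / h ^ 2) * y
            + (18 * b * c7 / h ^ 2) * y ^ 2 from funext fun y => by ring, integ_quad]
    field_simp
    ring
  simp only [hinner]
  rw [show (fun x => 6 * a * (x - x1c) * (2 * c3 + 6 * c6 * x) / h + 12 * b * c7 * h)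
      = fun x => (-12 * a * c3 * x1c / h + 12 * b * c7 * h)
          + ((12 * a * c3 - 36 * a * c6 * x1c) / h) * x + (36 * a * c6 / h) * x ^ 2
      from funext fun x => by field_simp; ring, integ_quad]
  have hc6 : ∀ x : ℝ, (∫ _ in (x2c - h)..(x2c + h), 6 * c6) = 2 * h * (6 * c6) := by
    intro x
    rw [intervalIntegral.integral_const, smul_eq_mul]
    ring
  have hc7 : ∀ x : ℝ, (∫ _ in (x2c - h)..(x2c + h), 6 * c7) = 2 * h * (6 * c7) := by
    intro x
    rw [intervalIntegral.integral_const, smul_eq_mul]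
    ring
  simp only [hc6, hc7, intervalIntegral.integral_const, smul_eq_mul]
  field_simp
  ring
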